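/- Let N and M be positive integers, let A₁, …, A_M ∈ ℂ^{N×N} be Hermitian positive definite matrices, and let B₁, …, B_M ∈ ℂ^{N×N} be Hermitian matrices. Fix an index n with 1 ≤ n ≤ M. Then on the convex set S = { s ∈ ℝ : A_m + s·B_m is positive definite for every m = 1, …, M }, the function f_n(s) = log₂ ( Σ_{t=1}^M ( det((A_n + A_t) + s·(B_n + B_t)) )^{-1} ) is convex. -/

import Mathlib

/-!
`X ↦ log det X` is concave on the cone of positive definite matrices: congruence by `√X` reduces
`det X ^ a * det Y ^ b ≤ det (a • X + b • Y)` to `X = 1`, where it is weighted AM–GM applied to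
each eigenvalue of `Y`. Hence each summand `s ↦ det (C + s • D)⁻¹` is log-convex in `s`, and by
Hölder's inequality a finite sum of log-convex functions is again log-convex.
-/

open Matrix Real
open scoped ComplexOrder

lemma Real.sum_rpow_mul_rpow_le {ι : Type*} (t : Finset ι) {f g : ι → ℝ}
    (hf : ∀ i ∈ t, 0 ≤ f i) (hg : ∀ i ∈ t, 0 ≤ g i) {a b : ℝ} (ha : 0 < a) (hb : 0 < b)
    (hab : a + b = 1) :
    ∑ i ∈ t, f i ^ a * g i ^ b ≤ (∑ i ∈ t, f i) ^ a * (∑ i ∈ t, g i) ^ b := by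
  have hpow : ∀ {c x : ℝ}, 0 < c → 0 ≤ x → (x ^ c) ^ (1 / c) = x := fun hc hx => by
    rw [← rpow_mul hx, mul_one_div_cancel hc.ne', rpow_one]
  have := inner_le_Lp_mul_Lq_of_nonneg t (holderConjugate_one_div ha hb hab)
    (fun i hi => rpow_nonneg (hf i hi) a) (fun i hi => rpow_nonneg (hg i hi) b)
  rwa [Finset.sum_congr rfl fun i hi => hpow ha (hf i hi),
    Finset.sum_congr rfl fun i hi => hpow hb (hg i hi), one_div_one_div, one_div_one_div] at this

section LogConvex

variable {E ι : Type*} [AddCommGroup E] [Module ℝ E] {s : Set E}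

lemma ConvexOn.le_rpow_mul_rpow_of_log {f : E → ℝ} (hf : ConvexOn ℝ s fun x => log (f x))
    (hpos : ∀ x ∈ s, 0 < f x) {x y : E} (hx : x ∈ s) (hy : y ∈ s) {a b : ℝ} (ha : 0 ≤ a)
    (hb : 0 ≤ b) (hab : a + b = 1) : f (a • x + b • y) ≤ f x ^ a * f y ^ b := by
  have hxy := hf.1 hx hy ha hb hab
  rw [← log_le_log_iff (hpos _ hxy) (by have := hpos x hx; have := hpos y hy; positivity),
    log_mul (rpow_pos_of_pos (hpos x hx) a).ne' (rpow_pos_of_pos (hpos y hy) b).ne',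
    log_rpow (hpos x hx), log_rpow (hpos y hy)]
  exact hf.2 hx hy ha hb hab

lemma ConvexOn.log_sum {t : Finset ι} (ht : t.Nonempty) {f : ι → E → ℝ}
    (hpos : ∀ i ∈ t, ∀ x ∈ s, 0 < f i x) (hf : ∀ i ∈ t, ConvexOn ℝ s fun x => log (f i x)) :
    ConvexOn ℝ s fun x => log (∑ i ∈ t, f i x) := by
  have hs : Convex ℝ s := (hf _ ht.choose_spec).1
  refine convexOn_iff_forall_pos.mpr ⟨hs, fun x hx y hy a b ha hb hab => ?_⟩
  have hsum : ∀ z ∈ s, 0 < ∑ i ∈ t, f i z := fun z hz =>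
    Finset.sum_pos (fun i hi => hpos i hi z hz) ht
  calc log (∑ i ∈ t, f i (a • x + b • y))
      ≤ log ((∑ i ∈ t, f i x) ^ a * (∑ i ∈ t, f i y) ^ b) := by
        refine log_le_log (hsum _ (hs hx hy ha.le hb.le hab)) ?_
        refine (Finset.sum_le_sum fun i hi => (hf i hi).le_rpow_mul_rpow_of_log (hpos i hi)
          hx hy ha.le hb.le hab).trans ?_
        exact sum_rpow_mul_rpow_le t (fun i hi => (hpos i hi x hx).le)
          (fun i hi => (hpos i hi y hy).le) ha hb hab
    _ = a • log (∑ i ∈ t, f i x) + b • log (∑ i ∈ t, f i y) := by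
        rw [log_mul (rpow_pos_of_pos (hsum x hx) a).ne' (rpow_pos_of_pos (hsum y hy) b).ne',
          log_rpow (hsum x hx), log_rpow (hsum y hy), smul_eq_mul, smul_eq_mul]

end LogConvex

namespace Matrix

variable {𝕜 n : Type*} [RCLike 𝕜] [Fintype n] [DecidableEq n]

lemma IsHermitian.re_det {A : Matrix n n 𝕜} (hA : A.IsHermitian) :
    RCLike.re A.det = ∏ i, hA.eigenvalues i := by
  rw [hA.det_eq_prod_eigenvalues, ← RCLike.ofReal_prod, RCLike.ofReal_re]

lemma IsHermitian.re_det_mul {A : Matrix n n 𝕜} (hA : A.IsHermitian) (z : 𝕜) :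
    RCLike.re (A.det * z) = RCLike.re A.det * RCLike.re z := by
  rw [hA.det_eq_prod_eigenvalues, ← RCLike.ofReal_prod, RCLike.re_ofReal_mul, RCLike.ofReal_re]

lemma PosDef.re_det_pos {A : Matrix n n 𝕜} (hA : A.PosDef) : 0 < RCLike.re A.det := by
  rw [hA.1.re_det]
  exact Finset.prod_pos fun i _ => hA.eigenvalues_pos i

lemma PosSemidef.re_det_nonneg {A : Matrix n n 𝕜} (hA : A.PosSemidef) :
    0 ≤ RCLike.re A.det := by
  rw [hA.1.re_det]
  exact Finset.prod_nonneg fun i _ => hA.eigenvalues_nonneg i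

lemma IsHermitian.det_smul_one_add_smul {A : Matrix n n 𝕜} (hA : A.IsHermitian) (c d : ℝ) :
    (c • 1 + d • A).det = ∏ i, ((c + d * hA.eigenvalues i : ℝ) : 𝕜) := by
  set U := Unitary.conjStarAlgAut ℝ (Matrix n n 𝕜) hA.eigenvectorUnitary
  have hconj : c • 1 + d • A =
      U (diagonal fun i => ((c + d * hA.eigenvalues i : ℝ) : 𝕜)) := by
    have hdiag : (diagonal fun i => ((c + d * hA.eigenvalues i : ℝ) : 𝕜)) =
        c • 1 + d • diagonal (RCLike.ofReal ∘ hA.eigenvalues) := by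
      ext i j
      rcases eq_or_ne i j with rfl | hij
      · simp [RCLike.real_smul_eq_coe_mul]
      · simp [hij]
    conv_lhs => rw [hA.spectral_theorem]
    rw [hdiag, map_add, map_smul, map_smul, map_one]
    rfl
  rw [hconj, Unitary.conjStarAlgAut_apply, det_mul_right_comm,
    Unitary.mul_star_self_of_mem hA.eigenvectorUnitary.2, one_mul, det_diagonal]

lemma PosSemidef.re_det_rpow_le_re_det_smul_one_add_smul {M : Matrix n n 𝕜} (hM : M.PosSemidef)
    {a b : ℝ} (ha : 0 ≤ a) (hb : 0 ≤ b) (hab : a + b = 1) :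
    RCLike.re M.det ^ b ≤ RCLike.re (a • 1 + b • M).det := by
  rw [hM.1.det_smul_one_add_smul, ← RCLike.ofReal_prod, RCLike.ofReal_re, hM.1.re_det,
    ← Real.finsetProd_rpow _ _ fun i _ => hM.eigenvalues_nonneg i]
  refine Finset.prod_le_prod (fun i _ => rpow_nonneg (hM.eigenvalues_nonneg i) b) fun i _ => ?_
  simpa using geom_mean_le_arith_mean2_weighted ha hb zero_le_one (hM.eigenvalues_nonneg i) hab

open scoped MatrixOrder in
lemma PosDef.re_det_rpow_mul_re_det_rpow_le {X Y : Matrix n n 𝕜} (hX : X.PosDef)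
    (hY : Y.PosSemidef) {a b : ℝ} (ha : 0 ≤ a) (hb : 0 ≤ b) (hab : a + b = 1) :
    RCLike.re X.det ^ a * RCLike.re Y.det ^ b ≤ RCLike.re (a • X + b • Y).det := by
  set L := CFC.sqrt X
  have hLL : L * L = X := CFC.sqrt_mul_sqrt_self X hX.posSemidef.nonneg
  have hLpos : L.PosDef := (IsStrictlyPositive.sqrt X hX.isStrictlyPositive).posDef
  have hL : IsUnit L.det := (isUnit_iff_isUnit_det L).mp hLpos.isUnit
  have hLinv : (L⁻¹).IsHermitian := hLpos.1.inv
  set M := L⁻¹ * Y * L⁻¹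
  have hM : M.PosSemidef := by simpa [hLinv.eq] using hY.mul_mul_conjTranspose_same L⁻¹
  have hLML : L * M * L = Y := by
    simp only [M, ← Matrix.mul_assoc, mul_nonsing_inv _ hL, Matrix.one_mul]
    rw [Matrix.mul_assoc, nonsing_inv_mul _ hL, Matrix.mul_one]
  have hre_det_conj (Z : Matrix n n 𝕜) :
      RCLike.re (L * Z * L).det = RCLike.re X.det * RCLike.re Z.det := by
    rw [det_mul, det_mul, mul_right_comm, ← det_mul, hLL, hX.1.re_det_mul]
  have hcombo : a • X + b • Y = L * (a • 1 + b • M) * L := by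
    rw [← hLL, ← hLML]
    simp only [Matrix.mul_add, Matrix.add_mul, mul_smul_comm, smul_mul_assoc, Matrix.mul_one,
      Matrix.mul_assoc]
  have hdetX : 0 < RCLike.re X.det := hX.re_det_pos
  rw [hcombo, hre_det_conj, ← hLML, hre_det_conj, mul_rpow hdetX.le hM.re_det_nonneg, ← mul_assoc,
    ← rpow_add hdetX, hab, rpow_one]
  exact mul_le_mul_of_nonneg_left (hM.re_det_rpow_le_re_det_smul_one_add_smul ha hb hab) hdetX.le

omit [Fintype n] [DecidableEq n] in
lemma convex_setOf_posDef : Convex ℝ {X : Matrix n n 𝕜 | X.PosDef} := by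
  intro X hX Y hY a b ha hb hab
  rcases ha.eq_or_lt with rfl | ha
  · simpa [show b = 1 by linarith] using hY
  · exact (hX.smul ha).add_posSemidef (hY.posSemidef.smul hb)

lemma concaveOn_log_re_det :
    ConcaveOn ℝ {X : Matrix n n 𝕜 | X.PosDef} fun X => log (RCLike.re X.det) := by
  refine ⟨convex_setOf_posDef, fun X hX Y hY a b ha hb hab => ?_⟩
  have hXd := PosDef.re_det_pos hX
  have hYd := PosDef.re_det_pos hY
  rw [smul_eq_mul, smul_eq_mul, ← log_rpow hXd, ← log_rpow hYd,
    ← log_mul (rpow_pos_of_pos hXd a).ne' (rpow_pos_of_pos hYd b).ne']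
  exact log_le_log (by positivity) (hX.re_det_rpow_mul_re_det_rpow_le hY.posSemidef ha hb hab)

lemma convexOn_log_inv_re_det_add_smul (C D : Matrix n n 𝕜) :
    ConvexOn ℝ {s : ℝ | (C + s • D).PosDef} fun s => log (RCLike.re (C + s • D).det)⁻¹ := by
  have hline : ∀ s : ℝ, AffineMap.lineMap C (C + D) s = C + s • D := fun s => by
    rw [AffineMap.lineMap_apply_module', add_sub_cancel_left, add_comm]
  have := concaveOn_log_re_det.comp_affineMap (AffineMap.lineMap C (C + D))
  simp only [Set.preimage_ofPred_eq, Function.comp_def, hline] at this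
  simpa only [log_inv, Pi.neg_def] using this.neg

end Matrix

theorem log_sum_inv_det_convex_general (N M : ℕ)
    (A B : Fin M → Matrix (Fin N) (Fin N) ℂ)
    (n : Fin M) :
    ConvexOn ℝ {s : ℝ | ∀ m, (A m + s • B m).PosDef}
      (fun s : ℝ => Real.logb 2
        (∑ t, ((((A n + A t) + s • (B n + B t)).det.re))⁻¹)) := by
  set S := {s : ℝ | ∀ m, (A m + s • B m).PosDef}
  have hS : Convex ℝ S := by
    simpa only [S, Set.ofPred_forall] using
      convex_iInter fun m => (convexOn_log_inv_re_det_add_smul (A m) (B m)).1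
  have hpd : ∀ s ∈ S, ∀ t, ((A n + A t) + s • (B n + B t)).PosDef := fun s hs t => by
    rw [smul_add, add_add_add_comm]
    exact (hs n).add (hs t)
  have hlog : ConvexOn ℝ S fun s => log (∑ t, (((A n + A t) + s • (B n + B t)).det.re)⁻¹) :=
    ConvexOn.log_sum ⟨n, Finset.mem_univ n⟩ (fun t _ s hs => inv_pos.2 (hpd s hs t).re_det_pos)
      fun t _ => (convexOn_log_inv_re_det_add_smul _ _).subset (fun s hs => hpd s hs t) hS
  simpa only [Real.logb, div_eq_inv_mul, smul_eq_mul] using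
    hlog.smul (inv_nonneg.2 (log_nonneg one_le_two))

/-- with `A₁,…,A_M` Hermitian positive definite and `B₁,…,B_M`
Hermitian, for a fixed index `n`, on the convex set
`S = {s ∈ ℝ : A_m + s·B_m is positive definite for all m}` the function
`f_n(s) = log₂(Σ_t (det((A_n + A_t) + s·(B_n + B_t)))^{-1})` is convex. -/
theorem log_sum_inv_det_convex (N M : ℕ) (hN : 0 < N) (hM : 0 < M)
    (A B : Fin M → Matrix (Fin N) (Fin N) ℂ)
    (hA : ∀ m, (A m).PosDef) (hB : ∀ m, (B m).IsHermitian) (n : Fin M) :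
    ConvexOn ℝ {s : ℝ | ∀ m, (A m + s • B m).PosDef}
      (fun s : ℝ => Real.logb 2
        (∑ t, ((((A n + A t) + s • (B n + B t)).det.re))⁻¹)) :=
  log_sum_inv_det_convex_general N M A B n
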